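/- Two time point g-formula: let (L₀, Y₀, A₀, L₁, Y₁, A₁, Y₂) be discrete random variables with static-regime counterfactuals. Assume: (i) consistency: A₀ = a₀ implies (L₁, Y₁, A₁) = (L₁^{a₀}, Y₁^{a₀}, A₁^{a₀}), and (A₀, A₁) = (a₀, a₁) implies Y₂ = Y₂^{a₀,a₁}; (ii) sequential exchangeability: (Y₁^{a₀}, A₁^{a₀}, Y₂^{a₀,a₁}, L₁^{a₀}) ⊥ A₀ | (L₀, Y₀), and Y₂^{a₀,a₁} ⊥ A₁^{a₀} | (L₀, Y₀, L₁^{a₀}, Y₁^{a₀}, A₀); (iii) positivity at both time points. Then E[Y₂^{g_j}], where Y₂^{g_j} = Σ_{a₀,a₁} 1{A₀^{g_j+} = a₀, A₁^{g_j+} = a₁} Y₂^{a₀,a₁} with A₀^{g_j+} = g_j(Y₀,A₀) and A₁^{g_j+} = g_j(Y₁^{g_j}, A₁^{g_j}), equals the two-step g-formula: Σ E[Y₂ | l̄₁, ȳ₁, A₀ = g_j(y₀,a₀), A₁ = g_j(y₁,a₁)] · f(l₁, y₁, a₁ | l₀, y₀, A₀ = g_j(y₀,a₀)) · f(l₀,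 y₀, a₀). -/
import Mathlib


open Finset
open scoped NNReal Classical

noncomputable section

/-- The add-on-`j` regime assignment rule. -/
def addOn (j : Bool) (y : ℝ≥0) (a : Bool) : Bool := if 0 < y then j else a

variable {Ω : Type*} [Fintype Ω]

/-- Probability of an event under the mass function `p` on a finite sample space. -/
def Pr (p : Ω → ℝ) (E : Ω → Prop) : ℝ := ∑ ω, if E ω then p ω else 0

/-- Expectation of a real random variable under `p`. -/
def Ex (p : Ω → ℝ) (f : Ω → ℝ) : ℝ := ∑ ω, p ω * f ω

/-- Conditional expectation of `f` given the event `E` (0 when `Pr p E = 0`). -/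
def CE (p : Ω → ℝ) (f : Ω → ℝ) (E : Ω → Prop) : ℝ :=
  (∑ ω, if E ω then p ω * f ω else 0) / Pr p E

/-- Conditional probability of `E` given `F` (0 when `Pr p F = 0`). -/
def CPr (p : Ω → ℝ) (E F : Ω → Prop) : ℝ := Pr p (fun ω => E ω ∧ F ω) / Pr p F

variable {L' : Type*}

/-- Regime-assigned treatment at time 0 under the add-on-`j` regime. -/
def A0plus (j : Bool) (Y0 : Ω → ℝ≥0) (A0 : Ω → Bool) (ω : Ω) : Bool :=
  addOn j (Y0 ω) (A0 ω)

/-- Counterfactual natural outcome `Y₁^{g_j}` at time 1 under the add-on regime. -/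
def Y1g (j : Bool) (Y0 : Ω → ℝ≥0) (A0 : Ω → Bool) (Y1cf : Bool → Ω → ℝ≥0) (ω : Ω) : ℝ≥0 :=
  ∑ a0 : Bool, if A0plus j Y0 A0 ω = a0 then Y1cf a0 ω else 0

/-- Counterfactual natural treatment `A₁^{g_j}` at time 1 under the add-on regime. -/
def A1g (j : Bool) (Y0 : Ω → ℝ≥0) (A0 : Ω → Bool) (A1cf : Bool → Ω → Bool) (ω : Ω) : Bool :=
  A1cf (A0plus j Y0 A0 ω) ω

/-- Regime-assigned treatment at time 1 under the add-on-`j` regime. -/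
def A1plus (j : Bool) (Y0 : Ω → ℝ≥0) (A0 : Ω → Bool)
    (Y1cf : Bool → Ω → ℝ≥0) (A1cf : Bool → Ω → Bool) (ω : Ω) : Bool :=
  addOn j (Y1g j Y0 A0 Y1cf ω) (A1g j Y0 A0 A1cf ω)

/-- Counterfactual outcome `Y₂^{g_j}` at time 2 under the add-on regime. -/
def Y2g (j : Bool) (Y0 : Ω → ℝ≥0) (A0 : Ω → Bool)
    (Y1cf : Bool → Ω → ℝ≥0) (A1cf : Bool → Ω → Bool)
    (Y2cf : Bool → Bool → Ω → ℝ) (ω : Ω) : ℝ :=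
  ∑ a0 : Bool, ∑ a1 : Bool,
    (if A0plus j Y0 A0 ω = a0 ∧ A1plus j Y0 A0 Y1cf A1cf ω = a1 then (1 : ℝ) else 0) *
      Y2cf a0 a1 ω

section Helpers

variable {p : Ω → ℝ} {E F : Ω → Prop}

lemma Pr_nonneg (hp : ∀ ω, 0 ≤ p ω) (E : Ω → Prop) : 0 ≤ Pr p E :=
  Finset.sum_nonneg fun ω _ => by split <;> [exact hp ω; exact le_refl 0]

lemma Pr_congr (h : ∀ ω, E ω ↔ F ω) : Pr p E = Pr p F :=
  Finset.sum_congr rfl fun ω _ => if_congr (h ω) rfl rfl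

lemma Pr_congr_ae (hp : ∀ ω, 0 ≤ p ω) (h : ∀ ω, 0 < p ω → (E ω ↔ F ω)) :
    Pr p E = Pr p F := by
  refine Finset.sum_congr rfl fun ω _ => ?_
  rcases (hp ω).lt_or_eq with h0 | h0
  · exact if_congr (h ω h0) rfl rfl
  · split_ifs <;> simp [← h0]

lemma Pr_le (hp : ∀ ω, 0 ≤ p ω) (h : ∀ ω, 0 < p ω → E ω → F ω) : Pr p E ≤ Pr p F := by
  refine Finset.sum_le_sum fun ω _ => ?_
  rcases (hp ω).lt_or_eq with h0 | h0
  · split_ifs with h1 h2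
    · exact le_refl _
    · exact absurd (h ω h0 h1) h2
    · exact hp ω
    · exact le_refl _
  · split_ifs <;> simp [← h0]

lemma Pr_eq_zero_of_le (hp : ∀ ω, 0 ≤ p ω) (h : ∀ ω, 0 < p ω → E ω → F ω)
    (hF : Pr p F = 0) : Pr p E = 0 :=
  le_antisymm (hF ▸ Pr_le hp h) (Pr_nonneg hp E)

lemma Pr_eq_zero' (h : ∀ ω, ¬ E ω) : Pr p E = 0 :=
  Finset.sum_eq_zero fun ω _ => if_neg (h ω)

lemma Pr_eq_zero_imp (hp : ∀ ω, 0 ≤ p ω) (hE : Pr p E = 0) : ∀ ω, E ω → p ω = 0 := by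
  intro ω hω
  have h := (Finset.sum_eq_zero_iff_of_nonneg
    (fun ω _ => by split_ifs; exacts [hp ω, le_refl 0])).1 hE ω (Finset.mem_univ ω)
  rwa [if_pos hω] at h

lemma sumW_decomp_left (p : Ω → ℝ) (f : Ω → ℝ) (E : Ω → Prop)
    [inst : ∀ ω, Decidable (E ω)] :
    (∑ ω, if E ω then p ω * f ω else 0) =
      ∑ v ∈ Finset.image f Finset.univ, v * Pr p (fun ω => E ω ∧ f ω = v) := by
  have h : ∀ v : ℝ, v * Pr p (fun ω => E ω ∧ f ω = v) =
      ∑ ω, if E ω then (if f ω = v then v * p ω else 0) else 0 := by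
    intro v
    rw [Pr, Finset.mul_sum]
    refine Finset.sum_congr rfl fun ω _ => ?_
    by_cases h1 : E ω <;> by_cases h2 : f ω = v <;> simp [h1, h2]
  simp_rw [h]
  rw [Finset.sum_comm]
  refine Finset.sum_congr rfl fun ω _ => ?_
  by_cases h1 : E ω
  · simp only [h1, if_true]
    rw [Finset.sum_ite_eq (Finset.image f Finset.univ) (f ω) (fun v => v * p ω),
      if_pos (Finset.mem_image_of_mem f (Finset.mem_univ ω)), mul_comm]
  · simp [h1]

lemma sumW_decomp_right (p : Ω → ℝ) (f : Ω → ℝ) (E : Ω → Prop)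
    [inst : ∀ ω, Decidable (E ω)] :
    (∑ ω, if E ω then p ω * f ω else 0) =
      ∑ v ∈ Finset.image f Finset.univ, v * Pr p (fun ω => f ω = v ∧ E ω) := by
  rw [sumW_decomp_left p f E]
  exact Finset.sum_congr rfl fun v _ => by rw [Pr_congr (fun ω => and_comm)]

lemma CE_eq' (p : Ω → ℝ) (f : Ω → ℝ) (E : Ω → Prop) [inst : ∀ ω, Decidable (E ω)] :
    CE p f E = (∑ ω, if E ω then p ω * f ω else 0) / Pr p E := by
  unfold CE
  congr 1
  exact Finset.sum_congr rfl fun ω _ => by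
    rw [Subsingleton.elim (inst ω) (Classical.propDecidable (E ω))]

lemma sumW_congr (hp : ∀ ω, 0 ≤ p ω) {f g : Ω → ℝ}
    [instE : ∀ ω, Decidable (E ω)] [instF : ∀ ω, Decidable (F ω)]
    (hEF : ∀ ω, 0 < p ω → (E ω ↔ F ω)) (hfg : ∀ ω, 0 < p ω → E ω → f ω = g ω) :
    (∑ ω, if E ω then p ω * f ω else 0) = ∑ ω, if F ω then p ω * g ω else 0 := by
  refine Finset.sum_congr rfl fun ω _ => ?_
  rcases (hp ω).lt_or_eq with h0 | h0
  · by_cases hE : E ω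
    · rw [if_pos hE, if_pos ((hEF ω h0).1 hE), hfg ω h0 hE]
    · rw [if_neg hE, if_neg (fun h => hE ((hEF ω h0).2 h))]
  · split_ifs <;> simp [← h0]

lemma sumW_eq_zero (hp : ∀ ω, 0 ≤ p ω) {f : Ω → ℝ} [instE : ∀ ω, Decidable (E ω)]
    (h : ∀ ω, 0 < p ω → ¬ E ω) :
    (∑ ω, if E ω then p ω * f ω else 0) = 0 :=
  Finset.sum_eq_zero fun ω _ => by
    rcases (hp ω).lt_or_eq with h0 | h0
    · rw [if_neg (h ω h0)]
    · split_ifs <;> simp [← h0]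

lemma pos_of_CPr_pos (hp : ∀ ω, 0 ≤ p ω) (h : 0 < CPr p E F) :
    0 < Pr p (fun ω => E ω ∧ F ω) := by
  rcases (Pr_nonneg hp fun ω => E ω ∧ F ω).lt_or_eq with h0 | h0
  · exact h0
  · rw [CPr, ← h0, zero_div] at h
    exact absurd h (lt_irrefl 0)

end Helpers

/-- Two time point g-formula for the add-on-`j` regime. -/
theorem addOn_g_formula_two_time_points [Fintype L']
    (p : Ω → ℝ) (hp : ∀ ω, 0 ≤ p ω) (hp1 : ∑ ω, p ω = 1)
    (L0 : Ω → L') (Y0 : Ω → ℝ≥0) (A0 : Ω → Bool)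
    (L1 : Ω → L') (Y1 : Ω → ℝ≥0) (A1 : Ω → Bool) (Y2 : Ω → ℝ)
    (L1cf : Bool → Ω → L') (Y1cf : Bool → Ω → ℝ≥0) (A1cf : Bool → Ω → Bool)
    (Y2cf : Bool → Bool → Ω → ℝ) (j : Bool)
    -- consistency at time 0: A₀ = a₀ implies (L₁, Y₁, A₁) = (L₁^{a₀}, Y₁^{a₀}, A₁^{a₀})
    (hcons1 : ∀ ω, 0 < p ω → ∀ a0 : Bool, A0 ω = a0 →
      L1 ω = L1cf a0 ω ∧ Y1 ω = Y1cf a0 ω ∧ A1 ω = A1cf a0 ω)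
    -- consistency at time 1: (A₀, A₁) = (a₀, a₁) implies Y₂ = Y₂^{a₀,a₁}
    (hcons2 : ∀ ω, 0 < p ω → ∀ a0 a1 : Bool, A0 ω = a0 → A1 ω = a1 →
      Y2 ω = Y2cf a0 a1 ω)
    -- sequential exchangeability, time 0:
    -- (Y₁^{a₀}, A₁^{a₀}, Y₂^{a₀,a₁}, L₁^{a₀}) ⊥ A₀ | (L₀, Y₀)
    (hexch0 : ∀ (a0 a1 : Bool) (y1 : ℝ≥0) (b : Bool) (v : ℝ) (l1 : L')
        (a0' : Bool) (l0 : L') (y0 : ℝ≥0),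
      Pr p (fun ω => (Y1cf a0 ω = y1 ∧ A1cf a0 ω = b ∧ Y2cf a0 a1 ω = v ∧ L1cf a0 ω = l1) ∧
          A0 ω = a0' ∧ L0 ω = l0 ∧ Y0 ω = y0) *
        Pr p (fun ω => L0 ω = l0 ∧ Y0 ω = y0) =
      Pr p (fun ω => (Y1cf a0 ω = y1 ∧ A1cf a0 ω = b ∧ Y2cf a0 a1 ω = v ∧ L1cf a0 ω = l1) ∧
          L0 ω = l0 ∧ Y0 ω = y0) *
        Pr p (fun ω => A0 ω = a0' ∧ L0 ω = l0 ∧ Y0 ω = y0))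
    -- sequential exchangeability, time 1:
    -- Y₂^{a₀,a₁} ⊥ A₁^{a₀} | (L₀, Y₀, L₁^{a₀}, Y₁^{a₀}, A₀)
    (hexch1 : ∀ (a0 a1 : Bool) (v : ℝ) (b : Bool) (l0 : L') (y0 : ℝ≥0)
        (l1 : L') (y1 : ℝ≥0) (a0' : Bool),
      Pr p (fun ω => Y2cf a0 a1 ω = v ∧ A1cf a0 ω = b ∧
          L0 ω = l0 ∧ Y0 ω = y0 ∧ L1cf a0 ω = l1 ∧ Y1cf a0 ω = y1 ∧ A0 ω = a0') *
        Pr p (fun ω => L0 ω = l0 ∧ Y0 ω = y0 ∧ L1cf a0 ω = l1 ∧ Y1cf a0 ω = y1 ∧ A0 ω = a0') =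
      Pr p (fun ω => Y2cf a0 a1 ω = v ∧
          L0 ω = l0 ∧ Y0 ω = y0 ∧ L1cf a0 ω = l1 ∧ Y1cf a0 ω = y1 ∧ A0 ω = a0') *
        Pr p (fun ω => A1cf a0 ω = b ∧
          L0 ω = l0 ∧ Y0 ω = y0 ∧ L1cf a0 ω = l1 ∧ Y1cf a0 ω = y1 ∧ A0 ω = a0'))
    -- positivity at time 0
    (hpos0 : ∀ (l0 : L') (y0 : ℝ≥0) (a0 : Bool),
      0 < Pr p (fun ω => L0 ω = l0 ∧ Y0 ω = y0 ∧ A0 ω = a0) →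
      0 < CPr p (fun ω => A0 ω = addOn j y0 a0) (fun ω => L0 ω = l0 ∧ Y0 ω = y0))
    -- positivity at time 1
    (hpos1 : ∀ (l0 : L') (y0 : ℝ≥0) (a0' : Bool) (l1 : L') (y1 : ℝ≥0) (a1 : Bool),
      0 < Pr p (fun ω => L0 ω = l0 ∧ Y0 ω = y0 ∧ A0 ω = a0' ∧
        L1 ω = l1 ∧ Y1 ω = y1 ∧ A1 ω = a1) →
      0 < CPr p (fun ω => A1 ω = addOn j y1 a1)
        (fun ω => L0 ω = l0 ∧ Y0 ω = y0 ∧ A0 ω = a0' ∧ L1 ω = l1 ∧ Y1 ω = y1)) :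
    Ex p (Y2g j Y0 A0 Y1cf A1cf Y2cf) =
      ∑ l0 : L', ∑ y0 ∈ Finset.image Y0 Finset.univ, ∑ a0 : Bool,
        ∑ l1 : L', ∑ y1 ∈ Finset.image Y1 Finset.univ, ∑ a1 : Bool,
          CE p Y2 (fun ω => L0 ω = l0 ∧ Y0 ω = y0 ∧ L1 ω = l1 ∧ Y1 ω = y1 ∧
              A0 ω = addOn j y0 a0 ∧ A1 ω = addOn j y1 a1) *
            CPr p (fun ω => L1 ω = l1 ∧ Y1 ω = y1 ∧ A1 ω = a1)
              (fun ω => L0 ω = l0 ∧ Y0 ω = y0 ∧ A0 ω = addOn j y0 a0) *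
            Pr p (fun ω => L0 ω = l0 ∧ Y0 ω = y0 ∧ A0 ω = a0) := by
  classical
  -- pointwise simplification of the natural-value definitions
  have hY1g : ∀ ω, Y1g j Y0 A0 Y1cf ω = Y1cf (A0plus j Y0 A0 ω) ω := by
    intro ω
    simp only [Y1g]
    cases h0 : A0plus j Y0 A0 ω <;> simp [Fintype.sum_bool, h0]
  have hY2g : ∀ ω, Y2g j Y0 A0 Y1cf A1cf Y2cf ω =
      Y2cf (A0plus j Y0 A0 ω) (A1plus j Y0 A0 Y1cf A1cf ω) ω := by
    intro ω
    simp only [Y2g]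
    cases h0 : A0plus j Y0 A0 ω <;> cases h1 : A1plus j Y0 A0 Y1cf A1cf ω <;>
      simp [Fintype.sum_bool, h0, h1]
  -- the stratum-level g-formula identity
  have star : ∀ (l0 : L') (y0 : ℝ≥0) (a0 : Bool) (l1 : L') (y1 : ℝ≥0) (a1 : Bool),
      (∑ ω, if (L0 ω = l0 ∧ Y0 ω = y0 ∧ A0 ω = a0 ∧ L1cf (addOn j y0 a0) ω = l1 ∧
          Y1cf (addOn j y0 a0) ω = y1 ∧ A1cf (addOn j y0 a0) ω = a1) then
          p ω * Y2cf (addOn j y0 a0) (addOn j y1 a1) ω else 0) =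
        CE p Y2 (fun ω => L0 ω = l0 ∧ Y0 ω = y0 ∧ L1 ω = l1 ∧ Y1 ω = y1 ∧
            A0 ω = addOn j y0 a0 ∧ A1 ω = addOn j y1 a1) *
          CPr p (fun ω => L1 ω = l1 ∧ Y1 ω = y1 ∧ A1 ω = a1)
            (fun ω => L0 ω = l0 ∧ Y0 ω = y0 ∧ A0 ω = addOn j y0 a0) *
          Pr p (fun ω => L0 ω = l0 ∧ Y0 ω = y0 ∧ A0 ω = a0) := by
    intro l0 y0 a0 l1 y1 a1
    set g0 := addOn j y0 a0 with hg0
    set g1 := addOn j y1 a1 with hg1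
    set PAa0 := Pr p (fun ω => L0 ω = l0 ∧ Y0 ω = y0 ∧ A0 ω = a0) with hPAa0def
    set PAg0 := Pr p (fun ω => L0 ω = l0 ∧ Y0 ω = y0 ∧ A0 ω = g0) with hPAg0def
    set PDa1 := Pr p (fun ω => L0 ω = l0 ∧ Y0 ω = y0 ∧ A0 ω = g0 ∧ L1 ω = l1 ∧ Y1 ω = y1 ∧ A1 ω = a1) with hPDa1def
    set PDg1 := Pr p (fun ω => L0 ω = l0 ∧ Y0 ω = y0 ∧ A0 ω = g0 ∧ L1 ω = l1 ∧ Y1 ω = y1 ∧ A1 ω = g1) with hPDg1def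
    have step1 : ∀ v : ℝ,
        Pr p (fun ω => (L0 ω = l0 ∧ Y0 ω = y0 ∧ A0 ω = a0 ∧ L1cf g0 ω = l1 ∧ Y1cf g0 ω = y1 ∧ A1cf g0 ω = a1) ∧ Y2cf g0 g1 ω = v) * PAg0 =
        Pr p (fun ω => Y2cf g0 g1 ω = v ∧ L0 ω = l0 ∧ Y0 ω = y0 ∧ A0 ω = g0 ∧ L1 ω = l1 ∧ Y1 ω = y1 ∧ A1 ω = a1) * PAa0 := by
      intro v
      have h1 := hexch0 g0 g1 y1 a1 v l1 a0 l0 y0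
      have h2 := hexch0 g0 g1 y1 a1 v l1 g0 l0 y0
      have c1 : Pr p (fun ω => (Y1cf g0 ω = y1 ∧ A1cf g0 ω = a1 ∧ Y2cf g0 g1 ω = v ∧ L1cf g0 ω = l1) ∧ A0 ω = a0 ∧ L0 ω = l0 ∧ Y0 ω = y0) =
          Pr p (fun ω => (L0 ω = l0 ∧ Y0 ω = y0 ∧ A0 ω = a0 ∧ L1cf g0 ω = l1 ∧ Y1cf g0 ω = y1 ∧ A1cf g0 ω = a1) ∧ Y2cf g0 g1 ω = v) := Pr_congr fun ω => by tauto
      have c3 : Pr p (fun ω => A0 ω = a0 ∧ L0 ω = l0 ∧ Y0 ω = y0) = PAa0 := by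
        rw [hPAa0def]; exact Pr_congr fun ω => by tauto
      have c2 : Pr p (fun ω => A0 ω = g0 ∧ L0 ω = l0 ∧ Y0 ω = y0) = PAg0 := by
        rw [hPAg0def]; exact Pr_congr fun ω => by tauto
      have c4 : Pr p (fun ω => (Y1cf g0 ω = y1 ∧ A1cf g0 ω = a1 ∧ Y2cf g0 g1 ω = v ∧ L1cf g0 ω = l1) ∧ A0 ω = g0 ∧ L0 ω = l0 ∧ Y0 ω = y0) =
          Pr p (fun ω => Y2cf g0 g1 ω = v ∧ L0 ω = l0 ∧ Y0 ω = y0 ∧ A0 ω = g0 ∧ L1 ω = l1 ∧ Y1 ω = y1 ∧ A1 ω = a1) := by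
        refine Pr_congr_ae hp fun ω hpω => ?_
        constructor
        · rintro ⟨⟨hy1', ha1', hv', hl1'⟩, hA0', hl0', hy0'⟩
          obtain ⟨e1, e2, e3⟩ := hcons1 ω hpω g0 hA0'
          exact ⟨hv', hl0', hy0', hA0', e1.trans hl1', e2.trans hy1', e3.trans ha1'⟩
        · rintro ⟨hv', hl0', hy0', hA0', hl1', hy1', ha1'⟩
          obtain ⟨e1, e2, e3⟩ := hcons1 ω hpω g0 hA0'
          exact ⟨⟨e2.symm.trans hy1', e3.symm.trans ha1', hv', e1.symm.trans hl1'⟩,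
            hA0', hl0', hy0'⟩
      rw [c1, c3] at h1
      rw [c4, c2] at h2
      by_cases hB : Pr p (fun ω => L0 ω = l0 ∧ Y0 ω = y0) = 0
      · have z1 : PAa0 = 0 := by
          rw [hPAa0def]; exact Pr_eq_zero_of_le hp (fun ω _ h => ⟨h.1, h.2.1⟩) hB
        have z2 : PAg0 = 0 := by
          rw [hPAg0def]; exact Pr_eq_zero_of_le hp (fun ω _ h => ⟨h.1, h.2.1⟩) hB
        rw [z1, z2, mul_zero, mul_zero]
      · exact mul_right_cancel₀ hB (by linear_combination PAg0 * h1 - PAa0 * h2)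
    have step2 : ∀ v : ℝ,
        Pr p (fun ω => Y2cf g0 g1 ω = v ∧ L0 ω = l0 ∧ Y0 ω = y0 ∧ A0 ω = g0 ∧ L1 ω = l1 ∧ Y1 ω = y1 ∧ A1 ω = a1) * PDg1 =
        Pr p (fun ω => Y2cf g0 g1 ω = v ∧ L0 ω = l0 ∧ Y0 ω = y0 ∧ A0 ω = g0 ∧ L1 ω = l1 ∧ Y1 ω = y1 ∧ A1 ω = g1) * PDa1 := by
      intro v
      have h3 := hexch1 g0 g1 v a1 l0 y0 l1 y1 g0
      have h4 := hexch1 g0 g1 v g1 l0 y0 l1 y1 g0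
      have d1 : ∀ b : Bool,
          Pr p (fun ω => Y2cf g0 g1 ω = v ∧ A1cf g0 ω = b ∧ L0 ω = l0 ∧ Y0 ω = y0 ∧ L1cf g0 ω = l1 ∧ Y1cf g0 ω = y1 ∧ A0 ω = g0) =
          Pr p (fun ω => Y2cf g0 g1 ω = v ∧ L0 ω = l0 ∧ Y0 ω = y0 ∧ A0 ω = g0 ∧
            L1 ω = l1 ∧ Y1 ω = y1 ∧ A1 ω = b) := by
        intro b
        refine Pr_congr_ae hp fun ω hpω => ?_
        constructor
        · rintro ⟨hv', hb', hl0', hy0', hl1', hy1', hA0'⟩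
          obtain ⟨e1, e2, e3⟩ := hcons1 ω hpω g0 hA0'
          exact ⟨hv', hl0', hy0', hA0', e1.trans hl1', e2.trans hy1', e3.trans hb'⟩
        · rintro ⟨hv', hl0', hy0', hA0', hl1', hy1', hb'⟩
          obtain ⟨e1, e2, e3⟩ := hcons1 ω hpω g0 hA0'
          exact ⟨hv', e3.symm.trans hb', hl0', hy0', e1.symm.trans hl1',
            e2.symm.trans hy1', hA0'⟩
      have d2 : ∀ b : Bool,
          Pr p (fun ω => A1cf g0 ω = b ∧ L0 ω = l0 ∧ Y0 ω = y0 ∧ L1cf g0 ω = l1 ∧ Y1cf g0 ω = y1 ∧ A0 ω = g0) =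
          Pr p (fun ω => L0 ω = l0 ∧ Y0 ω = y0 ∧ A0 ω = g0 ∧ L1 ω = l1 ∧
            Y1 ω = y1 ∧ A1 ω = b) := by
        intro b
        refine Pr_congr_ae hp fun ω hpω => ?_
        constructor
        · rintro ⟨hb', hl0', hy0', hl1', hy1', hA0'⟩
          obtain ⟨e1, e2, e3⟩ := hcons1 ω hpω g0 hA0'
          exact ⟨hl0', hy0', hA0', e1.trans hl1', e2.trans hy1', e3.trans hb'⟩
        · rintro ⟨hl0', hy0', hA0', hl1', hy1', hb'⟩
          obtain ⟨e1, e2, e3⟩ := hcons1 ω hpω g0 hA0'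
          exact ⟨e3.symm.trans hb', hl0', hy0', e1.symm.trans hl1',
            e2.symm.trans hy1', hA0'⟩
      have d2a : Pr p (fun ω => A1cf g0 ω = a1 ∧ L0 ω = l0 ∧ Y0 ω = y0 ∧ L1cf g0 ω = l1 ∧ Y1cf g0 ω = y1 ∧ A0 ω = g0) = PDa1 := by
        rw [hPDa1def]; exact d2 a1
      have d2g : Pr p (fun ω => A1cf g0 ω = g1 ∧ L0 ω = l0 ∧ Y0 ω = y0 ∧ L1cf g0 ω = l1 ∧ Y1cf g0 ω = y1 ∧ A0 ω = g0) = PDg1 := by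
        rw [hPDg1def]; exact d2 g1
      rw [d1 a1, d2a] at h3
      rw [d1 g1, d2g] at h4
      by_cases hC : Pr p (fun ω => L0 ω = l0 ∧ Y0 ω = y0 ∧ L1cf g0 ω = l1 ∧ Y1cf g0 ω = y1 ∧ A0 ω = g0) = 0
      · have z1 : PDa1 = 0 := by
          rw [hPDa1def]
          refine Pr_eq_zero_of_le hp (fun ω hpω h => ?_) hC
          obtain ⟨e1, e2, e3⟩ := hcons1 ω hpω g0 h.2.2.1
          exact ⟨h.1, h.2.1, e1.symm.trans h.2.2.2.1, e2.symm.trans h.2.2.2.2.1, h.2.2.1⟩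
        have z2 : PDg1 = 0 := by
          rw [hPDg1def]
          refine Pr_eq_zero_of_le hp (fun ω hpω h => ?_) hC
          obtain ⟨e1, e2, e3⟩ := hcons1 ω hpω g0 h.2.2.1
          exact ⟨h.1, h.2.1, e1.symm.trans h.2.2.2.1, e2.symm.trans h.2.2.2.2.1, h.2.2.1⟩
        rw [z1, z2, mul_zero, mul_zero]
      · exact mul_right_cancel₀ hC (by linear_combination PDg1 * h3 - PDa1 * h4)
    have hTdec : (∑ ω, if (L0 ω = l0 ∧ Y0 ω = y0 ∧ A0 ω = a0 ∧ L1cf g0 ω = l1 ∧ Y1cf g0 ω = y1 ∧ A1cf g0 ω = a1) then p ω * Y2cf g0 g1 ω else 0) =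
        ∑ v ∈ Finset.image (Y2cf g0 g1) Finset.univ,
          v * Pr p (fun ω => (L0 ω = l0 ∧ Y0 ω = y0 ∧ A0 ω = a0 ∧ L1cf g0 ω = l1 ∧ Y1cf g0 ω = y1 ∧ A1cf g0 ω = a1) ∧ Y2cf g0 g1 ω = v) :=
      sumW_decomp_left p (Y2cf g0 g1) _
    have hNdec : (∑ ω, if (L0 ω = l0 ∧ Y0 ω = y0 ∧ A0 ω = g0 ∧ L1 ω = l1 ∧ Y1 ω = y1 ∧ A1 ω = g1) then p ω * Y2cf g0 g1 ω else 0) =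
        ∑ v ∈ Finset.image (Y2cf g0 g1) Finset.univ,
          v * Pr p (fun ω => Y2cf g0 g1 ω = v ∧ L0 ω = l0 ∧ Y0 ω = y0 ∧ A0 ω = g0 ∧ L1 ω = l1 ∧ Y1 ω = y1 ∧ A1 ω = g1) :=
      sumW_decomp_right p (Y2cf g0 g1) _
    have key : (∑ ω, if (L0 ω = l0 ∧ Y0 ω = y0 ∧ A0 ω = a0 ∧ L1cf g0 ω = l1 ∧ Y1cf g0 ω = y1 ∧ A1cf g0 ω = a1) then p ω * Y2cf g0 g1 ω else 0) * PAg0 * PDg1 =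
        (∑ ω, if (L0 ω = l0 ∧ Y0 ω = y0 ∧ A0 ω = g0 ∧ L1 ω = l1 ∧ Y1 ω = y1 ∧ A1 ω = g1) then p ω * Y2cf g0 g1 ω else 0) * PDa1 * PAa0 := by
      rw [hTdec, hNdec, Finset.sum_mul, Finset.sum_mul, Finset.sum_mul, Finset.sum_mul]
      refine Finset.sum_congr rfl fun v _ => ?_
      linear_combination (v * PDg1) * step1 v + (v * PAa0) * step2 v
    have hN : (∑ ω, if (L0 ω = l0 ∧ Y0 ω = y0 ∧ A0 ω = g0 ∧ L1 ω = l1 ∧ Y1 ω = y1 ∧ A1 ω = g1) then p ω * Y2cf g0 g1 ω else 0) =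
        ∑ ω, if (L0 ω = l0 ∧ Y0 ω = y0 ∧ L1 ω = l1 ∧ Y1 ω = y1 ∧
          A0 ω = g0 ∧ A1 ω = g1) then p ω * Y2 ω else 0 :=
      sumW_congr hp (fun ω _ => by tauto)
        (fun ω hpω h => (hcons2 ω hpω g0 g1 h.2.2.1 h.2.2.2.2.2).symm)
    rw [CE_eq' p Y2 (fun ω => L0 ω = l0 ∧ Y0 ω = y0 ∧ L1 ω = l1 ∧ Y1 ω = y1 ∧
      A0 ω = g0 ∧ A1 ω = g1)]
    simp only [CPr]
    have eF : Pr p (fun ω => L0 ω = l0 ∧ Y0 ω = y0 ∧ L1 ω = l1 ∧ Y1 ω = y1 ∧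
        A0 ω = g0 ∧ A1 ω = g1) = PDg1 := by
      rw [hPDg1def]; exact Pr_congr fun ω => by tauto
    have eNum : Pr p (fun ω => (L1 ω = l1 ∧ Y1 ω = y1 ∧ A1 ω = a1) ∧
        L0 ω = l0 ∧ Y0 ω = y0 ∧ A0 ω = g0) = PDa1 := by
      rw [hPDa1def]; exact Pr_congr fun ω => by tauto
    rw [eF, eNum, ← hPAg0def, ← hN]
    by_cases hA : PAa0 = 0
    · rw [hA, mul_zero]
      refine sumW_eq_zero hp fun ω hpω hE => ?_
      exact absurd (Pr_eq_zero_imp hp (hPAa0def ▸ hA) ω ⟨hE.1, hE.2.1, hE.2.2.1⟩)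
        (ne_of_gt hpω)
    · have hA' : 0 < Pr p (fun ω => L0 ω = l0 ∧ Y0 ω = y0 ∧ A0 ω = a0) := by
        rcases (Pr_nonneg hp _).lt_or_eq with h | h
        · exact h
        · exact absurd (hPAa0def.trans h.symm) hA
      have hg0pos : 0 < PAg0 := by
        have h := hpos0 l0 y0 a0 hA'
        rw [← hg0] at h
        have h2 := pos_of_CPr_pos hp h
        have e : Pr p (fun ω => A0 ω = g0 ∧ L0 ω = l0 ∧ Y0 ω = y0) = PAg0 := by
          rw [hPAg0def]; exact Pr_congr fun ω => by tauto
        rwa [e] at h2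
      by_cases hD : PDa1 = 0
      · have hQ : ∀ v ∈ Finset.image (Y2cf g0 g1) Finset.univ,
            v * Pr p (fun ω => (L0 ω = l0 ∧ Y0 ω = y0 ∧ A0 ω = a0 ∧ L1cf g0 ω = l1 ∧ Y1cf g0 ω = y1 ∧ A1cf g0 ω = a1) ∧ Y2cf g0 g1 ω = v) = 0 := by
          intro v _
          have h1 := step1 v
          have hR : Pr p (fun ω => Y2cf g0 g1 ω = v ∧ L0 ω = l0 ∧ Y0 ω = y0 ∧ A0 ω = g0 ∧ L1 ω = l1 ∧ Y1 ω = y1 ∧ A1 ω = a1) = 0 := by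
            refine Pr_eq_zero_of_le hp (fun ω _ h => h.2) ?_
            rw [← hPDa1def]; exact hD
          rw [hR, zero_mul] at h1
          rcases mul_eq_zero.1 h1 with h | h
          · rw [h, mul_zero]
          · exact absurd h (ne_of_gt hg0pos)
        rw [hD, zero_div, mul_zero, zero_mul, hTdec]
        exact Finset.sum_eq_zero hQ
      · have hD' : 0 < Pr p (fun ω => L0 ω = l0 ∧ Y0 ω = y0 ∧ A0 ω = g0 ∧ L1 ω = l1 ∧ Y1 ω = y1 ∧ A1 ω = a1) := by
          rcases (Pr_nonneg hp _).lt_or_eq with h | h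
          · exact h
          · exact absurd (hPDa1def.trans h.symm) hD
        have hg1pos : 0 < PDg1 := by
          have h := hpos1 l0 y0 g0 l1 y1 a1 hD'
          rw [← hg1] at h
          have h2 := pos_of_CPr_pos hp h
          have e : Pr p (fun ω => A1 ω = g1 ∧ L0 ω = l0 ∧ Y0 ω = y0 ∧ A0 ω = g0 ∧
              L1 ω = l1 ∧ Y1 ω = y1) = PDg1 := by
            rw [hPDg1def]; exact Pr_congr fun ω => by tauto
          rwa [e] at h2
        rw [div_mul_div_comm, div_mul_eq_mul_div,
          eq_div_iff (mul_ne_zero (ne_of_gt hg1pos) (ne_of_gt hg0pos))]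
        linear_combination key

  -- Step A: the expectation equals the sum of stratum terms, with `y1` ranging over
  -- the image of the natural value `Y1g`.
  have stepA : Ex p (Y2g j Y0 A0 Y1cf A1cf Y2cf) =
      ∑ l0 : L', ∑ y0 ∈ Finset.image Y0 Finset.univ, ∑ a0 : Bool,
        ∑ l1 : L', ∑ y1 ∈ Finset.image (Y1g j Y0 A0 Y1cf) Finset.univ, ∑ a1 : Bool,
          (∑ ω, if (L0 ω = l0 ∧ Y0 ω = y0 ∧ A0 ω = a0 ∧ L1cf (addOn j y0 a0) ω = l1 ∧
              Y1cf (addOn j y0 a0) ω = y1 ∧ A1cf (addOn j y0 a0) ω = a1) then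
              p ω * Y2cf (addOn j y0 a0) (addOn j y1 a1) ω else 0) := by
    rw [Ex]
    refine Eq.symm ?_
    simp_rw [Finset.sum_comm (t := (Finset.univ : Finset Ω))]
    refine Finset.sum_congr rfl fun ω _ => ?_
    refine ((Finset.sum_eq_single_of_mem (L0 ω) (Finset.mem_univ _)
      (fun b _ hb => Finset.sum_eq_zero fun _ _ => Finset.sum_eq_zero fun _ _ =>
        Finset.sum_eq_zero fun _ _ => Finset.sum_eq_zero fun _ _ =>
        Finset.sum_eq_zero fun _ _ => if_neg fun h => hb h.1.symm)).trans ?_)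
    refine ((Finset.sum_eq_single_of_mem (Y0 ω) (Finset.mem_image_of_mem Y0 (Finset.mem_univ ω))
      (fun b _ hb => Finset.sum_eq_zero fun _ _ => Finset.sum_eq_zero fun _ _ =>
        Finset.sum_eq_zero fun _ _ =>
        Finset.sum_eq_zero fun _ _ => if_neg fun h => hb h.2.1.symm)).trans ?_)
    refine ((Finset.sum_eq_single_of_mem (A0 ω) (Finset.mem_univ _)
      (fun b _ hb => Finset.sum_eq_zero fun _ _ => Finset.sum_eq_zero fun _ _ =>
        Finset.sum_eq_zero fun _ _ => if_neg fun h => hb h.2.2.1.symm)).trans ?_)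
    refine ((Finset.sum_eq_single_of_mem (L1cf (addOn j (Y0 ω) (A0 ω)) ω) (Finset.mem_univ _)
      (fun b _ hb => Finset.sum_eq_zero fun _ _ =>
        Finset.sum_eq_zero fun _ _ => if_neg fun h => hb h.2.2.2.1.symm)).trans ?_)
    refine ((Finset.sum_eq_single_of_mem (Y1cf (addOn j (Y0 ω) (A0 ω)) ω)
      (hY1g ω ▸ Finset.mem_image_of_mem (Y1g j Y0 A0 Y1cf) (Finset.mem_univ ω))
      (fun b _ hb =>
        Finset.sum_eq_zero fun _ _ => if_neg fun h => hb h.2.2.2.2.1.symm)).trans ?_)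
    refine ((Finset.sum_eq_single_of_mem (A1cf (addOn j (Y0 ω) (A0 ω)) ω) (Finset.mem_univ _)
      (fun b _ hb => if_neg fun h => hb h.2.2.2.2.2.symm)).trans ?_)
    rw [if_pos ⟨rfl, rfl, rfl, rfl, rfl, rfl⟩]
    simp only [hY2g, A1plus, A1g, A0plus, hY1g]
  rw [stepA]
  refine Finset.sum_congr rfl fun l0 _ => Finset.sum_congr rfl fun y0 _ =>
    Finset.sum_congr rfl fun a0 _ => Finset.sum_congr rfl fun l1 _ => ?_
  have hsub : ∀ y1 ∈ Finset.image (Y1g j Y0 A0 Y1cf) Finset.univ ∪ Finset.image Y1 Finset.univ,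
      y1 ∉ Finset.image (Y1g j Y0 A0 Y1cf) Finset.univ →
      (∑ a1 : Bool, ∑ ω, if (L0 ω = l0 ∧ Y0 ω = y0 ∧ A0 ω = a0 ∧
          L1cf (addOn j y0 a0) ω = l1 ∧ Y1cf (addOn j y0 a0) ω = y1 ∧
          A1cf (addOn j y0 a0) ω = a1) then
          p ω * Y2cf (addOn j y0 a0) (addOn j y1 a1) ω else 0) = 0 := by
    intro y1 _ hy1
    refine Finset.sum_eq_zero fun a1 _ => Finset.sum_eq_zero fun ω _ => ?_
    refine if_neg fun h => hy1 ?_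
    have e : Y1g j Y0 A0 Y1cf ω = y1 := by
      rw [hY1g ω, show A0plus j Y0 A0 ω = addOn j y0 a0 from by
        simp only [A0plus, h.2.1, h.2.2.1]]
      exact h.2.2.2.2.1
    exact e ▸ Finset.mem_image_of_mem _ (Finset.mem_univ ω)
  have hsub2 : ∀ y1 ∈ Finset.image (Y1g j Y0 A0 Y1cf) Finset.univ ∪ Finset.image Y1 Finset.univ,
      y1 ∉ Finset.image Y1 Finset.univ →
      (∑ a1 : Bool, ∑ ω, if (L0 ω = l0 ∧ Y0 ω = y0 ∧ A0 ω = a0 ∧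
          L1cf (addOn j y0 a0) ω = l1 ∧ Y1cf (addOn j y0 a0) ω = y1 ∧
          A1cf (addOn j y0 a0) ω = a1) then
          p ω * Y2cf (addOn j y0 a0) (addOn j y1 a1) ω else 0) = 0 := by
    intro y1 _ hy1
    refine Finset.sum_eq_zero fun a1 _ => ?_
    rw [star l0 y0 a0 l1 y1 a1, CPr,
      Pr_eq_zero' (p := p)
        (E := fun ω => (L1 ω = l1 ∧ Y1 ω = y1 ∧ A1 ω = a1) ∧
          L0 ω = l0 ∧ Y0 ω = y0 ∧ A0 ω = addOn j y0 a0)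
        (fun ω h => hy1 (h.1.2.1 ▸ Finset.mem_image_of_mem Y1 (Finset.mem_univ ω))),
      zero_div, mul_zero, zero_mul]
  rw [Finset.sum_subset Finset.subset_union_left hsub,
    ← Finset.sum_subset Finset.subset_union_right hsub2]
  exact Finset.sum_congr rfl fun y1 _ => Finset.sum_congr rfl fun a1 _ =>
    star l0 y0 a0 l1 y1 a1
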